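/- For every real n > 0, the function s ↦ f_n(s) is differentiable on ℝ and its derivative satisfies, for every s ∈ ℝ, 2n · f_n′(s) = − I_{n+3}(s)/I_{n−1}(s) + (I_{n+1}(s)/I_{n−1}(s))². -/

import Mathlib

open MeasureTheory

/-- `I k s = ∫₀^∞ x^k e^{-x⁴/4 - s x²/2} dx`. -/
noncomputable def I (k s : ℝ) : ℝ :=
  ∫ x in Set.Ioi (0 : ℝ), x ^ k * Real.exp (-x ^ 4 / 4 - s * x ^ 2 / 2)

/-- The universal profile `f n s = I (n+1) s / (n · I (n-1) s)`. -/
noncomputable def f (n s : ℝ) : ℝ := I (n + 1) s / (n * I (n - 1) s)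

/-!
Differentiating under the integral sign gives `∂ₛ I_k = -I_{k+2} / 2`, which is justified by the
domination `x^{k+2} e^{-x⁴/4 - (s-1)x²/2}` for parameters near `s`; all the integrals converge
because the quartic term beats the quadratic one.  The quotient rule applied to
`f_n = I_{n+1} / (n I_{n-1})`, whose denominator is positive, then gives the formula.
-/

open Set Filter Real

noncomputable def integrand (k s x : ℝ) : ℝ := x ^ k * exp (-x ^ 4 / 4 - s * x ^ 2 / 2)

lemma quartic_exponent_le (s x : ℝ) : -x ^ 4 / 4 - s * x ^ 2 / 2 ≤ s ^ 2 - x ^ 4 / 8 := by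
  nlinarith [sq_nonneg (s + x ^ 2 / 4), sq_nonneg (x ^ 2)]

lemma integrand_nonneg (k s : ℝ) {x : ℝ} (hx : 0 ≤ x) : 0 ≤ integrand k s x :=
  mul_nonneg (rpow_nonneg hx k) (exp_pos _).le

lemma integrand_pos (k s : ℝ) {x : ℝ} (hx : 0 < x) : 0 < integrand k s x :=
  mul_pos (rpow_pos_of_pos hx k) (exp_pos _)

lemma integrand_antitone (k : ℝ) {x : ℝ} (hx : 0 ≤ x) : Antitone fun s ↦ integrand k s x :=
  fun _ _ hst ↦ mul_le_mul_of_nonneg_left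
    (exp_le_exp.2 (by nlinarith [sq_nonneg x])) (rpow_nonneg hx k)

lemma integrand_add_two (k s : ℝ) {x : ℝ} (hx : 0 < x) :
    integrand (k + 2) s x = x ^ 2 * integrand k s x := by
  rw [integrand, integrand, show k + 2 = k + ((2 : ℕ) : ℝ) by norm_num,
    rpow_add_natCast hx.ne']
  ring

lemma integrableOn_integrand {k : ℝ} (hk : -1 < k) (s : ℝ) :
    IntegrableOn (integrand k s) (Ioi 0) := by
  have hmajorant : IntegrableOn (fun x ↦ exp (s ^ 2) * (x ^ k * exp (-(1 / 8) * x ^ (4 : ℝ))))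
      (Ioi 0) :=
    (integrableOn_rpow_mul_exp_neg_mul_rpow hk (by norm_num) (by norm_num)).const_mul _
  refine hmajorant.integrable.mono' (by unfold integrand; fun_prop) ?_
  filter_upwards [ae_restrict_mem measurableSet_Ioi] with x hx
  rw [norm_of_nonneg (integrand_nonneg k s (le_of_lt hx)), rpow_ofNat, ← mul_assoc,
    mul_comm (exp _), mul_assoc, ← exp_add]
  refine mul_le_mul_of_nonneg_left (exp_le_exp.2 ?_) (rpow_nonneg (le_of_lt hx) k)
  linarith [quartic_exponent_le s x]

lemma I_pos {k : ℝ} (hk : -1 < k) (s : ℝ) : 0 < I k s := by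
  refine (setIntegral_pos_iff_support_of_nonneg_ae (f := integrand k s) ?_
    (integrableOn_integrand hk s)).2 ?_
  · filter_upwards [ae_restrict_mem measurableSet_Ioi] with x hx
    exact integrand_nonneg k s (le_of_lt hx)
  · have hsupport : Ioi (0 : ℝ) ⊆ Function.support (integrand k s) :=
      fun x hx ↦ (integrand_pos k s hx).ne'
    simp [inter_eq_right.2 hsupport]

lemma hasDerivAt_I {k : ℝ} (hk : -1 < k) (s : ℝ) :
    HasDerivAt (I k) (-(1 / 2) * I (k + 2) s) s := by
  have hderiv := hasDerivAt_integral_of_dominated_loc_of_deriv_le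
    (μ := volume.restrict (Ioi 0)) (F := integrand k)
    (F' := fun t x ↦ -(1 / 2) * integrand (k + 2) t x)
    (bound := fun x ↦ (1 / 2) * integrand (k + 2) (s - 1) x)
    (Metric.ball_mem_nhds s one_pos)
    (Eventually.of_forall fun t ↦ (integrableOn_integrand hk t).aestronglyMeasurable)
    (integrableOn_integrand hk s)
    (by unfold integrand; fun_prop) ?bound
    ((integrableOn_integrand (by linarith) (s - 1)).const_mul _) ?deriv
  · rw [integral_const_mul] at hderiv
    exact hderiv.2
  case bound =>
    filter_upwards [ae_restrict_mem measurableSet_Ioi] with x hx t ht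
    have hst : s - 1 ≤ t := by linarith [(abs_lt.1 (Metric.mem_ball.1 ht)).1]
    rw [norm_mul, norm_neg, norm_of_nonneg (integrand_nonneg _ t (le_of_lt hx)),
      norm_of_nonneg (by norm_num)]
    gcongr
    exact integrand_antitone _ (le_of_lt hx) hst
  case deriv =>
    filter_upwards [ae_restrict_mem measurableSet_Ioi] with x hx t _
    have hexponent : HasDerivAt (fun t ↦ -x ^ 4 / 4 - t * x ^ 2 / 2) (-(x ^ 2 / 2)) t := by
      simpa [mul_div_assoc] using
        ((hasDerivAt_id t).mul_const (x ^ 2 / 2)).const_sub (-x ^ 4 / 4)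
    refine (hexponent.exp.const_mul (x ^ k)).congr_deriv ?_
    rw [integrand_add_two k t hx, integrand]
    ring

lemma hasDerivAt_f {n : ℝ} (hn : 0 < n) (s : ℝ) :
    HasDerivAt (f n)
      ((-(I (n + 3) s / I (n - 1) s) + (I (n + 1) s / I (n - 1) s) ^ 2) / (2 * n)) s := by
  have hnum := hasDerivAt_I (show -1 < n + 1 by linarith) s
  have hden := (hasDerivAt_I (show -1 < n - 1 by linarith) s).const_mul n
  have hpos := I_pos (show -1 < n - 1 by linarith) s
  refine (hnum.div hden (mul_pos hn hpos).ne').congr_deriv ?_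
  rw [show n + 1 + 2 = n + 3 by ring, show n - 1 + 2 = n + 1 by ring]
  field_simp
  ring

/-- The profile `f_n` is differentiable and
`2n f_n'(s) = -I_{n+3}(s)/I_{n-1}(s) + (I_{n+1}(s)/I_{n-1}(s))²`. -/
theorem universal_profile_derivative (n : ℝ) (hn : 0 < n) :
    Differentiable ℝ (f n) ∧
    ∀ s : ℝ, 2 * n * deriv (f n) s =
      -(I (n + 3) s / I (n - 1) s) + (I (n + 1) s / I (n - 1) s) ^ 2 := by
  refine ⟨fun s ↦ (hasDerivAt_f hn s).differentiableAt, fun s ↦ ?_⟩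
  rw [(hasDerivAt_f hn s).deriv]
  field_simp
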